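/- Let M be a star matrix of a partition of Z_q^n into subcubes of the same dimension containing a transfractal T, let t be a column of M belonging to T and s a column of M not belonging to T. Then either the columns t and s do not overlap (no row has numerical values in both), or every row with a numerical value in column t also has a numerical value in column s, and all these values in column s are equal to a single number a ∈ Z_q. -/

import Mathlib

/-!
Distinct rows of a fractal matrix `M_{q,l}` carry different numbers in some common column, so
the coordinates of a point in the columns of a transfractal `T` fit at most one row of `T`.
Suppose the transfractal row `i` has the number `a` in the column `s` outside `T`, and pick a
point `y` in the subcube of another transfractal row `i'` with `y s ≠ a`. Replace the
coordinates of `y` in the columns of `T` by those of row `i`. The resulting point lies in some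
row `r`. If `r` belongs to `T`, separation forces `r` to be row `i`, contradicting `y s ≠ a`.
Otherwise `r` has only stars in the columns of `T`, so `y` itself lies in `r` as well as in
`i'`, contradicting disjointness. Hence the column `s` is constant on the rows of `T`, which
are the only rows with numbers in `t`.
-/

/-- The subcube of `(Z_q)^C` defined by a star pattern `p` (`none` = `*`):
all vectors agreeing with `p` on every coordinate where `p` is numerical. -/
def Subcube {q : ℕ} {C : Type} (p : C → Option (ZMod q)) : Set (C → ZMod q) :=
  {x | ∀ c : C, ∀ a : ZMod q, p c = some a → x c = a}

/-- The number of numerical entries of a star pattern. -/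
noncomputable def numCount {q : ℕ} {C : Type} (p : C → Option (ZMod q)) : ℕ :=
  Nat.card {c : C // (p c).isSome}

/-- The rows of the star matrix `M` define pairwise disjoint subcubes covering the cube. -/
def IsPartitionMatrix (q : ℕ) {R C : Type} (M : R → C → Option (ZMod q)) : Prop :=
  (∀ r r' : R, r ≠ r' → Subcube (M r) ∩ Subcube (M r') = ∅) ∧
  (∀ x : C → ZMod q, ∃ r : R, x ∈ Subcube (M r))

/-- A star matrix is A-primitive if every column has at least one numerical entry. -/
def APrimitive {q : ℕ} {R C : Type} (M : R → C → Option (ZMod q)) : Prop :=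
  ∀ c : C, ∃ r : R, (M r c).isSome

/-- Number of rows of the fractal matrix `M_{q,m}`. -/
def Nrows (q : ℕ) : ℕ → ℕ
  | 0 => 1
  | m + 1 => q * Nrows q m

/-- Number of columns of the fractal matrix `M_{q,m}`. -/
def Ncols (q : ℕ) : ℕ → ℕ
  | 0 => 0
  | m + 1 => 1 + q * Ncols q m

/-- Entry of the fractal matrix `M_{q,m}` in row `r`, column `c` (as natural number
indices): `M_{q,0}` has one row and no columns; `M_{q,m+1}` consists of `q` horizontal
stripes indexed by `a ∈ Z_q`, stripe `a` having the constant value `a` in the first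
column, a copy of `M_{q,m}` in the `a`-th of `q` column blocks, and all-stars elsewhere. -/
def fractalEntry (q : ℕ) : ℕ → ℕ → ℕ → Option (ZMod q)
  | 0, _, _ => none
  | m + 1, r, c =>
    if c = 0 then some (Nat.cast (r / Nrows q m))
    else if (c - 1) / Ncols q m = r / Nrows q m then
      fractalEntry q m (r % Nrows q m) ((c - 1) % Ncols q m)
    else none

/-- The fractal star matrix `M_{q,m}`. -/
def fractalMatrix (q m : ℕ) : Fin (Nrows q m) → Fin (Ncols q m) → Option (ZMod q) :=
  fun r c => fractalEntry q m r.1 c.1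

/-- A transfractal of the star matrix `M`: a submatrix (given by the injections `ρ` on rows
and `γ` on columns) which, up to these identifications, equals the fractal matrix `M_{q,l}`,
and such that every column of `M` through the submatrix has only stars outside its rows. -/
structure Transfractal (q : ℕ) {R : Type} {n : ℕ} (M : R → Fin n → Option (ZMod q))
    (l : ℕ) where
  ρ : Fin (Nrows q l) ↪ R
  γ : Fin (Ncols q l) ↪ Fin n
  eq_fractal : ∀ i j, M (ρ i) (γ j) = fractalMatrix q l i j
  stars_outside : ∀ j : Fin (Ncols q l), ∀ r : R, (∀ i, ρ i ≠ r) → M r (γ j) = none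

lemma Nrows_pos (q : ℕ) [NeZero q] (l : ℕ) : 0 < Nrows q l := by
  induction l with
  | zero => simp [Nrows]
  | succ m ih => exact Nat.mul_pos (Nat.pos_of_ne_zero (NeZero.ne q)) ih

/-- Column `1 + k * Ncols q m + c` of `M_{q,m+1}` is column `c` of its `k`-th block. -/
lemma fractalEntry_succ_block (q m k u : ℕ) {c : ℕ} (hc : c < Ncols q m) :
    fractalEntry q (m + 1) u (1 + k * Ncols q m + c) =
      if k = u / Nrows q m then fractalEntry q m (u % Nrows q m) c else none := by
  have hK : 0 < Ncols q m := by omega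
  have hsub : 1 + k * Ncols q m + c - 1 = c + k * Ncols q m := by omega
  simp only [fractalEntry, if_neg (by omega : 1 + k * Ncols q m + c ≠ 0), hsub,
    Nat.add_mul_div_right _ _ hK, Nat.div_eq_of_lt hc, zero_add, Nat.add_mul_mod_self_right,
    Nat.mod_eq_of_lt hc]

lemma fractalEntry_separates (q : ℕ) [NeZero q] (l : ℕ) {r r' : ℕ}
    (hr : r < Nrows q l) (hr' : r' < Nrows q l) (hne : r ≠ r') :
    ∃ c < Ncols q l, ∃ a b : ZMod q,
      fractalEntry q l r c = some a ∧ fractalEntry q l r' c = some b ∧ a ≠ b := by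
  induction l generalizing r r' with
  | zero => simp only [Nrows] at hr hr'; omega
  | succ m ih =>
    set N := Nrows q m
    have hN : 0 < N := Nrows_pos q m
    have hrq : r / N < q := Nat.div_lt_of_lt_mul (by rw [Nat.mul_comm]; exact hr)
    have hrq' : r' / N < q := Nat.div_lt_of_lt_mul (by rw [Nat.mul_comm]; exact hr')
    by_cases hblock : r / N = r' / N
    · have hmod : r % N ≠ r' % N := fun h =>
        hne (by rw [← Nat.div_add_mod r N, ← Nat.div_add_mod r' N, hblock, h])
      obtain ⟨c, hc, a, b, ha, hb, hab⟩ := ih (Nat.mod_lt _ hN) (Nat.mod_lt _ hN) hmod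
      have hcol : r / N * Ncols q m + c < q * Ncols q m :=
        calc r / N * Ncols q m + c < (r / N + 1) * Ncols q m := by rw [Nat.succ_mul]; omega
          _ ≤ q * Ncols q m := Nat.mul_le_mul_right _ hrq
      refine ⟨1 + r / N * Ncols q m + c, by simp only [Ncols]; omega, a, b, ?_, ?_, hab⟩
      · rw [fractalEntry_succ_block q m _ _ hc, if_pos rfl, ha]
      · rw [fractalEntry_succ_block q m _ _ hc, if_pos hblock, hb]
    · refine ⟨0, by simp [Ncols], (r / N : ℕ), (r' / N : ℕ), by simp [fractalEntry, N],
        by simp [fractalEntry, N], ?_⟩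
      rw [Ne, ZMod.natCast_eq_natCast_iff', Nat.mod_eq_of_lt hrq, Nat.mod_eq_of_lt hrq']
      exact hblock

lemma getD_mem_subcube {q : ℕ} {C : Type} (p : C → Option (ZMod q)) (b : ZMod q) :
    (fun c => (p c).getD b) ∈ Subcube p := by
  intro c a ha
  simp [ha]

lemma exists_mem_subcube_ne {q : ℕ} [Nontrivial (ZMod q)] {C : Type}
    (p : C → Option (ZMod q)) {c : C} {a : ZMod q} (hpa : p c ≠ some a) :
    ∃ y ∈ Subcube p, y c ≠ a := by
  obtain ⟨b, hb⟩ := exists_ne a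
  refine ⟨_, getD_mem_subcube p b, ?_⟩
  cases h : p c with
  | none => simpa [h] using hb
  | some a' => simpa [h] using fun h' => hpa (h ▸ congrArg some h')

lemma IsPartitionMatrix.eq_of_mem_subcube {q : ℕ} {R C : Type} {M : R → C → Option (ZMod q)}
    (hM : IsPartitionMatrix q M) {r r' : R} {x : C → ZMod q}
    (hr : x ∈ Subcube (M r)) (hr' : x ∈ Subcube (M r')) : r = r' := by
  by_contra hne
  have hx : x ∈ Subcube (M r) ∩ Subcube (M r') := ⟨hr, hr'⟩
  rwa [hM.1 r r' hne] at hx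

namespace Transfractal

variable {q : ℕ} {R : Type} {n l : ℕ} {M : R → Fin n → Option (ZMod q)}

lemma exists_rho_eq_of_isSome (T : Transfractal q M l) (j : Fin (Ncols q l)) {r : R}
    (hr : (M r (T.γ j)).isSome) : ∃ i, T.ρ i = r := by
  by_contra! hout
  rw [T.stars_outside j r hout] at hr
  exact Bool.false_ne_true hr

lemma eq_of_mem_subcube [NeZero q] (T : Transfractal q M l) {i i' : Fin (Nrows q l)}
    {x : Fin n → ZMod q} (hx : ∀ j a, M (T.ρ i) (T.γ j) = some a → x (T.γ j) = a)
    (hx' : x ∈ Subcube (M (T.ρ i'))) : i = i' := by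
  by_contra hne
  obtain ⟨c, hc, a, b, ha, hb, hab⟩ :=
    fractalEntry_separates q l i.2 i'.2 (fun h => hne (Fin.ext h))
  have ha' : M (T.ρ i) (T.γ ⟨c, hc⟩) = some a := (T.eq_fractal _ _).trans ha
  have hb' : M (T.ρ i') (T.γ ⟨c, hc⟩) = some b := (T.eq_fractal _ _).trans hb
  exact hab ((hx _ _ ha').symm.trans (hx' _ _ hb'))

lemma apply_eq_some_of_apply_eq_some [NeZero q] [Nontrivial (ZMod q)]
    (hM : IsPartitionMatrix q M) (T : Transfractal q M l) {s : Fin n} (hs : ∀ j, T.γ j ≠ s)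
    {i i' : Fin (Nrows q l)} {a : ZMod q} (ha : M (T.ρ i) s = some a) :
    M (T.ρ i') s = some a := by
  by_contra hne
  obtain ⟨y, hy, hya⟩ := exists_mem_subcube_ne (M (T.ρ i')) hne
  set z := (Set.range T.γ).piecewise (fun c => (M (T.ρ i) c).getD 0) y
  have hzT : ∀ j, z (T.γ j) = (M (T.ρ i) (T.γ j)).getD 0 := fun j =>
    Set.piecewise_eq_of_mem _ _ _ (Set.mem_range_self j)
  have hzy : ∀ c ∉ Set.range T.γ, z c = y c := fun c hc => Set.piecewise_eq_of_notMem _ _ _ hc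
  have hs' : s ∉ Set.range T.γ := by rintro ⟨j, hj⟩; exact hs j hj
  obtain ⟨r, hz⟩ := hM.2 z
  by_cases hrT : ∃ i'', T.ρ i'' = r
  · obtain ⟨i'', rfl⟩ := hrT
    have hi : i = i'' := T.eq_of_mem_subcube (fun j a h => by rw [hzT, h]; rfl) hz
    subst hi
    exact hya ((hzy s hs').symm.trans (hz s a ha))
  · push Not at hrT
    have hyr : y ∈ Subcube (M r) := by
      intro c b hb
      by_cases hc : c ∈ Set.range T.γ
      · obtain ⟨j, rfl⟩ := hc
        rw [T.stars_outside j r hrT] at hb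
        cases hb
      · exact (hzy c hc).symm.trans (hz c b hb)
    exact hrT i' (hM.eq_of_mem_subcube hy hyr)

lemma apply_eq_apply [NeZero q] [Nontrivial (ZMod q)] (hM : IsPartitionMatrix q M)
    (T : Transfractal q M l) {s : Fin n} (hs : ∀ j, T.γ j ≠ s) (i i' : Fin (Nrows q l)) :
    M (T.ρ i) s = M (T.ρ i') s := by
  cases ha : M (T.ρ i) s with
  | some a => exact (T.apply_eq_some_of_apply_eq_some hM hs ha).symm
  | none =>
    cases hb : M (T.ρ i') s with
    | none => rfl
    | some b => simpa [ha] using T.apply_eq_some_of_apply_eq_some hM hs (i' := i) hb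

end Transfractal

theorem stmt12_general (q n m l : ℕ) (hq : 2 ≤ q)
    (M : Fin (q ^ m) → Fin n → Option (ZMod q))
    (hpart : IsPartitionMatrix q M)
    (T : Transfractal q M l)
    (j : Fin (Ncols q l)) (s : Fin n) (hs : ∀ j', T.γ j' ≠ s) :
    (∀ r : Fin (q ^ m), (M r (T.γ j)).isSome → M r s = none) ∨
    (∃ a : ZMod q, ∀ r : Fin (q ^ m), (M r (T.γ j)).isSome → M r s = some a) := by
  have : Fact (1 < q) := ⟨hq⟩
  have hcol : ∀ r, (M r (T.γ j)).isSome → M r s = M (T.ρ ⟨0, Nrows_pos q l⟩) s := by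
    intro r hr
    obtain ⟨i, rfl⟩ := T.exists_rho_eq_of_isSome j hr
    exact T.apply_eq_apply hpart hs _ _
  cases h : M (T.ρ ⟨0, Nrows_pos q l⟩) s with
  | none => exact Or.inl fun r hr => (hcol r hr).trans h
  | some a => exact Or.inr ⟨a, fun r hr => (hcol r hr).trans h⟩

/-- Let `t = γ j` be a column of `M` belonging to the transfractal `T` and `s` a column of
`M` outside `T`. Then either `t` and `s` do not overlap, or every row with a number in
column `t` also has a number in column `s`, and all those values equal one number `a`. -/
theorem stmt12 (q n m l : ℕ) (hq : 2 ≤ q)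
    (M : Fin (q ^ m) → Fin n → Option (ZMod q))
    (hpart : IsPartitionMatrix q M)
    (hrows : ∀ r, numCount (M r) = m)
    (T : Transfractal q M l)
    (j : Fin (Ncols q l)) (s : Fin n) (hs : ∀ j', T.γ j' ≠ s) :
    (∀ r : Fin (q ^ m), (M r (T.γ j)).isSome → M r s = none) ∨
    (∃ a : ZMod q, ∀ r : Fin (q ^ m), (M r (T.γ j)).isSome → M r s = some a) :=
  stmt12_general q n m l hq M hpart T j s hs
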